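/- For each i ∈ ℤ and each past w ∈ G^{ℕ*}, let μ_{w,i} denote the unique probability measure on G^{{i, i+1, …}} (given by the Ionescu–Tulcea theorem) whose finite-dimensional distributions are μ_{w,i}(η(i) = g_i, …, η(n) = g_n) = ∏_{k=i}^{n} P(g_k | (g_{k−1}, …, g_i, w_{−1}, w_{−2}, …)) for all n ≥ i and g_i, …, g_n ∈ G. Then for all integers i ≤ s ≤ t < ∞, every bounded measurable f : G^{[s,t]} → ℝ, and all pasts w, v ∈ G^{ℕ*}: |∫ f((η(s), …, η(t))) dμ_{w,i}(η) − ∫ f((η(s), …, η(t))) dμ_{v,i}(η)| ≤ 2 ‖f‖_∞ ∑_{j=0}^{t−s} ρ_{s+j−i}, where ρ_n is computed from the house-of-cards chain with the sequence (a_k) derived from P, and ρ_0 := 1. -/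

import Mathlib

/-!
Couple the two chains by driving both with the same i.i.d. uniforms `U_n` through one update
function. For a past `h`, the update function cuts `[0, 1)` into consecutive levels: level `k`
has length `∑_g (a_k(g|h) - a_{k-1}(g|h))` and is shared among the symbols `g` in these
proportions, and what is left of `[0, 1)` is shared according to `P(g|h) - sup_k a_k(g|h)`. So a
uniform is mapped to a symbol with law `P(·|h)`, and a uniform below `a_k ≤ ∑_g a_k(g|h)` falls
in a level `≤ k`, where the symbol only depends on the last `k` symbols of the past.

Driven by the same uniforms, the house-of-cards chain `W` therefore counts symbols on which the
two chains are guaranteed to agree: if `W_{n+1} = W_n + 1` then `U_{n+1} < a_{W_n}` and the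
two pasts agree on the last `W_n` symbols. An observable of the window `[s, t]` can only differ
between the two chains on the event that `W` vanishes somewhere in the window, whose probability
is at most the sum of the `ρ`.
-/

open MeasureTheory Filter

section

variable {G : Type*} [Countable G] [Nonempty G] [MeasurableSpace G]
  [DiscreteMeasurableSpace G]

/-- `a_k(g | w_{-k},…,w_{-1})`: the infimum of `P(g|·)` over all pasts agreeing with
`w` on the `k` preceding instants. A past `w : ℕ → G` lists `w_{-1}, w_{-2}, …`. -/
noncomputable def akg (P : G → (ℕ → G) → ℝ) (k : ℕ) (g : G) (w : ℕ → G) : ℝ :=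
  ⨅ z : ℕ → G, P g (fun n => if n < k then w n else z (n - k))

/-- `a_k := inf_w ∑_g a_k(g|w)`. -/
noncomputable def akP (P : G → (ℕ → G) → ℝ) (k : ℕ) : ℝ :=
  ⨅ w : ℕ → G, ∑' g : G, akg P k g w

/-- House-of-cards chain: `hoc a u 0 k` is `W^0_k`. -/
noncomputable def hoc (a : ℕ → ℝ) (u : ℤ → ℝ) (m : ℤ) : ℕ → ℕ
  | 0 => 0
  | k + 1 => if u (m + k + 1) < a (hoc a u m k) then hoc a u m k + 1 else 0

/-- Return probability `ρ_k := ℙ(W^0_k = 0)`; note `ρ_0 = 1` automatically. -/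
noncomputable def rho (a : ℕ → ℝ) (μ : Measure (ℤ → ℝ)) (k : ℕ) : ENNReal :=
  μ {u | hoc a u 0 k = 0}

/-- The coordinates are i.i.d. uniform on `[0,1)` under `μ0`. -/
def IsIIDUniform (μ0 : Measure (ℤ → ℝ)) : Prop :=
  ProbabilityTheory.iIndepFun
    (fun i (u : ℤ → ℝ) => u i) μ0 ∧
  ∀ i : ℤ, μ0.map (fun u => u i) = volume.restrict (Set.Ico (0:ℝ) 1)

/-- `μi` has the finite-dimensional distributions of the chain started at time `i`
from the frozen past `w`; coordinate `n : ℕ` stands for time `i + n`, and the past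
`w : ℕ → G` lists `w_{-1}, w_{-2}, …`. -/
def HasFdds (P : G → (ℕ → G) → ℝ) (μi : Measure (ℕ → G)) (w : ℕ → G) : Prop :=
  ∀ (n : ℕ) (gs : ℕ → G),
    μi {η | ∀ m : ℕ, m ≤ n → η m = gs m} =
      ENNReal.ofReal (∏ k ∈ Finset.range (n + 1),
        P (gs k) (fun j => if j < k then gs (k - 1 - j) else w (j - k)))

end

theorem monotone_sum_range {c : ℕ → ℝ} (hc : ∀ m, 0 ≤ c m) :
    Monotone fun n => ∑ m ∈ Finset.range n, c m :=
  (Finset.sum_mono_set_of_nonneg hc).comp Finset.range_mono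

theorem measurable_nat_sInf {α : Type*} [MeasurableSpace α] {p : α → ℕ → Prop}
    (hp : ∀ n, MeasurableSet {x | p x n}) : Measurable fun x => sInf {n | p x n} := by
  classical
  refine measurable_to_countable' fun k => ?_
  have hpre : (fun x => sInf {n | p x n}) ⁻¹' {k} =
      ({x | p x k} ∩ ⋂ m ∈ Set.Iio k, {x | p x m}ᶜ) ∪ ({_x | k = 0} ∩ ⋂ m, {x | p x m}ᶜ) := by
    ext x
    by_cases h : ∃ n, p x n
    · have h' : ¬ ∀ m, ¬ p x m := not_forall_not.2 h
      simp only [Set.mem_preimage, Set.mem_singleton_iff]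
      rw [Nat.sInf_def (s := {n | p x n}) h, Nat.find_eq_iff]
      simp [h']
    · push Not at h
      simp [h, eq_comm]
  rw [hpre]
  exact ((hp k).inter (.biInter (Set.to_countable _) fun m _ => (hp m).compl)).union
    ((MeasurableSet.const _).inter (.iInter fun m => (hp m).compl))

theorem tsum_comm_of_nonneg {β γ : Type*} {f : β → γ → ℝ} (hf : ∀ b c, 0 ≤ f b c)
    (hrow : ∀ b, Summable (f b)) (hrows : Summable fun b => ∑' c, f b c)
    (hcol : ∀ c, Summable fun b => f b c) :
    ∑' b, ∑' c, f b c = ∑' c, ∑' b, f b c :=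
  (Summable.tsum_comm' ((summable_prod_of_nonneg fun p => hf p.1 p.2).2 ⟨hrow, hrows⟩) hrow
    hcol).symm

theorem measurable_domRestrict_finset {ι G : Type*} [MeasurableSpace G] (s : Finset ι) :
    Measurable ((s : Set ι).domRestrict : (ι → G) → s → G) :=
  measurable_pi_lambda _ fun _ => measurable_pi_apply _

theorem measurable_of_dependsOn_finset {ι G β : Type*} [MeasurableSpace G] [Countable G]
    [MeasurableSingletonClass G] [MeasurableSpace β] [Nonempty β] {f : (ι → G) → β}
    {s : Finset ι} (hf : DependsOn f s) : Measurable f := by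
  obtain ⟨F, rfl⟩ := dependsOn_iff_exists_comp.1 hf
  exact (measurable_of_countable F).comp (measurable_domRestrict_finset s)

theorem abs_integral_sub_le_of_eq_off {α : Type*} [MeasurableSpace α] {μ : Measure α}
    [IsFiniteMeasure μ] {F₁ F₂ : α → ℝ} {B : ℝ} {D : Set α} (hF₁ : Measurable F₁)
    (hF₂ : Measurable F₂) (hB₁ : ∀ x, |F₁ x| ≤ B) (hB₂ : ∀ x, |F₂ x| ≤ B) (hD : MeasurableSet D)
    (hF : ∀ x ∉ D, F₁ x = F₂ x) :
    |∫ x, F₁ x ∂μ - ∫ x, F₂ x ∂μ| ≤ 2 * B * μ.real D := by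
  have hi₁ : Integrable F₁ μ := .of_bound hF₁.aestronglyMeasurable B (ae_of_all _ hB₁)
  have hi₂ : Integrable F₂ μ := .of_bound hF₂.aestronglyMeasurable B (ae_of_all _ hB₂)
  have hpt : ∀ x, |F₁ x - F₂ x| ≤ D.indicator (fun _ => 2 * B) x := fun x => by
    by_cases hx : x ∈ D
    · rw [Set.indicator_of_mem hx]
      linarith [abs_sub (F₁ x) (F₂ x), hB₁ x, hB₂ x]
    · rw [Set.indicator_of_notMem hx, hF x hx, sub_self, abs_zero]
  rw [← integral_sub hi₁ hi₂]
  calc |∫ x, F₁ x - F₂ x ∂μ| ≤ ∫ x, |F₁ x - F₂ x| ∂μ := abs_integral_le_integral_abs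
    _ ≤ ∫ x, D.indicator (fun _ => 2 * B) x ∂μ :=
      integral_mono (hi₁.sub hi₂).abs ((integrable_const _).indicator hD) hpt
    _ = 2 * B * μ.real D := by rw [integral_indicator_const _ hD, smul_eq_mul, mul_comm]

noncomputable def firstExceed (c : ℕ → ℝ) (x : ℝ) : ℕ :=
  sInf {n | x < ∑ m ∈ Finset.range (n + 1), c m}

section firstExceed

variable {c c' : ℕ → ℝ} {x : ℝ} {n k : ℕ}

theorem firstExceed_le (h : x < ∑ m ∈ Finset.range (k + 1), c m) : firstExceed c x ≤ k :=
  Nat.sInf_le h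

theorem lt_sum_range_firstExceed_succ (h : x < ∑ m ∈ Finset.range (k + 1), c m) :
    x < ∑ m ∈ Finset.range (firstExceed c x + 1), c m :=
  Nat.sInf_mem (s := {n | x < ∑ m ∈ Finset.range (n + 1), c m}) ⟨k, h⟩

theorem firstExceed_eq (hc : ∀ m, 0 ≤ c m) (h₁ : ∑ m ∈ Finset.range n, c m ≤ x)
    (h₂ : x < ∑ m ∈ Finset.range (n + 1), c m) : firstExceed c x = n := by
  refine le_antisymm (firstExceed_le h₂) (le_csInf ⟨n, h₂⟩ fun k hk => ?_)
  by_contra! hkn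
  exact (hk.trans_le (monotone_sum_range hc hkn)).not_ge h₁

theorem firstExceed_spec (hs : Summable c) (hx₀ : 0 ≤ x)
    (hx : x < ∑' m, c m) :
    ∑ m ∈ Finset.range (firstExceed c x), c m ≤ x ∧
      x < ∑ m ∈ Finset.range (firstExceed c x + 1), c m := by
  obtain ⟨N, hN⟩ := (hs.hasSum.tendsto_sum_nat.eventually (lt_mem_nhds hx)).exists_forall_of_atTop
  refine ⟨?_, lt_sum_range_firstExceed_succ (hN (N + 1) N.le_succ)⟩
  rcases h : firstExceed c x with _ | k
  · simpa using hx₀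
  · simpa using Nat.notMem_of_lt_sInf (h ▸ k.lt_succ_self : k < firstExceed c x)

theorem firstExceed_congr (hx : x < ∑ m ∈ Finset.range (k + 1), c m)
    (hcc' : ∀ m ≤ k, c m = c' m) : firstExceed c x = firstExceed c' x := by
  have hiff : ∀ n ≤ k, (x < ∑ m ∈ Finset.range (n + 1), c m ↔
      x < ∑ m ∈ Finset.range (n + 1), c' m) := fun n hn => by
    rw [Finset.sum_congr rfl fun m hm => hcc' m (by simp at hm; omega)]
  have hx' := (hiff k le_rfl).1 hx
  refine le_antisymm (Nat.sInf_le ?_) (Nat.sInf_le ?_)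
  · exact (hiff _ (firstExceed_le hx')).2 (lt_sum_range_firstExceed_succ hx')
  · exact (hiff _ (firstExceed_le hx)).1 (lt_sum_range_firstExceed_succ hx)

theorem measurable_firstExceed (c : ℕ → ℝ) : Measurable (firstExceed c) :=
  measurable_nat_sInf fun _ => measurableSet_lt measurable_id measurable_const

end firstExceed

section allot

variable {ι : Type*} [Encodable ι]

noncomputable def extendEncode (c : ι → ℝ) : ℕ → ℝ :=
  Function.extend Encodable.encode c 0

@[simp]
theorem extendEncode_encode (c : ι → ℝ) (i : ι) : extendEncode c (Encodable.encode i) = c i :=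
  Encodable.encode_injective.extend_apply c 0 i

theorem extendEncode_of_notMem_range (c : ι → ℝ) {m : ℕ} (h : ¬ ∃ i : ι, Encodable.encode i = m) :
    extendEncode c m = 0 :=
  Function.extend_apply' _ _ _ h

theorem extendEncode_nonneg {c : ι → ℝ} (hc : ∀ i, 0 ≤ c i) (m : ℕ) : 0 ≤ extendEncode c m := by
  by_cases h : ∃ i : ι, Encodable.encode i = m
  · obtain ⟨i, rfl⟩ := h
    simpa using hc i
  · rw [extendEncode_of_notMem_range c h]

theorem summable_extendEncode {c : ι → ℝ} (hs : Summable c) : Summable (extendEncode c) :=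
  (summable_extend_zero Encodable.encode_injective).2 hs

theorem tsum_extendEncode (c : ι → ℝ) : ∑' m, extendEncode c m = ∑' i, c i :=
  tsum_extend_zero Encodable.encode_injective c

/-- `allot c` gives the interval `[cellStart c i, cellStart c i + c i)` to `i`: these intervals
are laid side by side from `0`, in the order of the codes of the labels. -/
noncomputable def cellStart (c : ι → ℝ) (i : ι) : ℝ :=
  ∑ m ∈ Finset.range (Encodable.encode i), extendEncode c m

noncomputable def allot [Nonempty ι] (c : ι → ℝ) (x : ℝ) : ι :=
  (Encodable.decode₂ ι (firstExceed (extendEncode c) x)).getD (Classical.arbitrary ι)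

variable {c : ι → ℝ} {x : ℝ} {i : ι}

theorem cellStart_nonneg (hc : ∀ i, 0 ≤ c i) : 0 ≤ cellStart c i :=
  Finset.sum_nonneg fun m _ => extendEncode_nonneg hc m

theorem cellStart_add_le_tsum (hc : ∀ i, 0 ≤ c i) (hs : Summable c) :
    cellStart c i + c i ≤ ∑' j, c j := by
  rw [← tsum_extendEncode, cellStart, ← extendEncode_encode c i, ← Finset.sum_range_succ]
  exact (summable_extendEncode hs).sum_le_tsum _ fun m _ => extendEncode_nonneg hc m

variable [Nonempty ι]

theorem allot_eq_of_mem (hc : ∀ i, 0 ≤ c i)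
    (hx : x ∈ Set.Ico (cellStart c i) (cellStart c i + c i)) : allot c x = i := by
  have hfe : firstExceed (extendEncode c) x = Encodable.encode i := by
    refine firstExceed_eq (extendEncode_nonneg hc) hx.1 ?_
    rw [Finset.sum_range_succ, extendEncode_encode]
    exact hx.2
  rw [allot, hfe, Encodable.decode₂_encode]
  rfl

theorem allot_mem (hs : Summable c) (hx₀ : 0 ≤ x) (hx : x < ∑' j, c j) :
    x ∈ Set.Ico (cellStart c (allot c x)) (cellStart c (allot c x) + c (allot c x)) := by
  obtain ⟨h₁, h₂⟩ :=
    firstExceed_spec (summable_extendEncode hs) hx₀ (by rwa [tsum_extendEncode])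
  rw [Finset.sum_range_succ] at h₂
  generalize hn : firstExceed (extendEncode c) x = n at h₁ h₂
  -- the cell reached has positive length, so it belongs to a label
  obtain ⟨i, rfl⟩ : ∃ i : ι, Encodable.encode i = n := by
    by_contra h
    rw [extendEncode_of_notMem_range c h] at h₂
    linarith
  have hallot : allot c x = i := by
    rw [allot, hn, Encodable.decode₂_encode]
    rfl
  rw [extendEncode_encode] at h₂
  rw [hallot]
  exact ⟨h₁, h₂⟩

theorem allot_eq_iff (hc : ∀ i, 0 ≤ c i) (hs : Summable c) (hx₀ : 0 ≤ x)
    (hx : x < ∑' j, c j) :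
    allot c x = i ↔ x ∈ Set.Ico (cellStart c i) (cellStart c i + c i) :=
  ⟨fun h => h ▸ allot_mem hs hx₀ hx, allot_eq_of_mem hc⟩

theorem measurable_allot [MeasurableSpace ι] (c : ι → ℝ) : Measurable (allot c) :=
  (measurable_of_countable fun n => (Encodable.decode₂ ι n).getD (Classical.arbitrary ι)).comp
    (measurable_firstExceed _)

end allot

section stack

variable {ι : Type*} {L L' : ℕ → ι → ℝ} {R R' : ι → ℝ} {x : ℝ} {i : ι}

noncomputable def levelMass (L : ℕ → ι → ℝ) (k : ℕ) : ℝ :=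
  ∑' i, L k i

theorem levelMass_nonneg (hL : ∀ k i, 0 ≤ L k i) (k : ℕ) : 0 ≤ levelMass L k :=
  tsum_nonneg (hL k)

theorem sum_range_levelMass_le_tsum (hL : ∀ k i, 0 ≤ L k i) (hM : Summable (levelMass L))
    (k : ℕ) : ∑ j ∈ Finset.range k, levelMass L j ≤ ∑' j, levelMass L j :=
  hM.sum_le_tsum _ fun j _ => levelMass_nonneg hL j

variable [Encodable ι] [Nonempty ι]

/-- `[0, ∑ₖ levelMass L k)` is cut into consecutive level intervals, the `k`-th one shared
among the labels according to `L k` by `allot`; the rest of the line is shared according to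
`R`. -/
noncomputable def stackAllot (L : ℕ → ι → ℝ) (R : ι → ℝ) (x : ℝ) : ι :=
  if x < ∑' k, levelMass L k then
    allot (L (firstExceed (levelMass L) x))
      (x - ∑ j ∈ Finset.range (firstExceed (levelMass L) x), levelMass L j)
  else allot R (x - ∑' k, levelMass L k)

theorem measurable_stackAllot [MeasurableSpace ι] (L : ℕ → ι → ℝ) (R : ι → ℝ) :
    Measurable (stackAllot L R) := by
  have hlevel : Measurable fun p : ℝ × ℕ =>
      allot (L p.2) (p.1 - ∑ j ∈ Finset.range p.2, levelMass L j) :=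
    measurable_from_prod_countable_left fun k =>
      (measurable_allot (L k)).comp (measurable_id.sub_const (∑ j ∈ Finset.range k, levelMass L j))
  unfold stackAllot
  exact Measurable.ite (measurableSet_lt measurable_id measurable_const)
    (hlevel.comp (measurable_id.prodMk (measurable_firstExceed _)))
    ((measurable_allot R).comp (measurable_id.sub_const _))

theorem stackAllot_congr (hL : ∀ k i, 0 ≤ L k i) (hM : Summable (levelMass L))
    (hL' : ∀ k i, 0 ≤ L' k i) (hM' : Summable (levelMass L')) {k : ℕ}
    (hx : x < ∑ j ∈ Finset.range (k + 1), levelMass L j) (hLL' : ∀ j ≤ k, L j = L' j) :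
    stackAllot L R x = stackAllot L' R' x := by
  have hMM' : ∀ j ≤ k, levelMass L j = levelMass L' j := fun j hj => by
    rw [levelMass, levelMass, hLL' j hj]
  have hsum : ∀ n ≤ k + 1, ∑ j ∈ Finset.range n, levelMass L j =
      ∑ j ∈ Finset.range n, levelMass L' j := fun n hn =>
    Finset.sum_congr rfl fun j hj => hMM' j (by simp at hj; omega)
  have hS : x < ∑' j, levelMass L j := hx.trans_le (sum_range_levelMass_le_tsum hL hM _)
  have hS' : x < ∑' j, levelMass L' j :=
    (hsum _ le_rfl ▸ hx).trans_le (sum_range_levelMass_le_tsum hL' hM' _)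
  have hle := firstExceed_le hx
  rw [stackAllot, stackAllot, if_pos hS, if_pos hS', ← firstExceed_congr hx hMM', hLL' _ hle,
    hsum _ (by omega)]

theorem stackAllot_eq_iff_of_lt (hL : ∀ k i, 0 ≤ L k i) (hLs : ∀ k, Summable (L k))
    (hM : Summable (levelMass L)) (hx₀ : 0 ≤ x) (hx : x < ∑' k, levelMass L k) :
    stackAllot L R x = i ↔ ∃ k, x - ∑ j ∈ Finset.range k, levelMass L j ∈
      Set.Ico (cellStart (L k) i) (cellStart (L k) i + L k i) := by
  obtain ⟨h₁, h₂⟩ := firstExceed_spec hM hx₀ hx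
  rw [Finset.sum_range_succ] at h₂
  rw [stackAllot, if_pos hx, allot_eq_iff (hL _) (hLs _) (by linarith) (by
    change _ < levelMass L _
    linarith)]
  refine ⟨fun h => ⟨_, h⟩, fun ⟨k, hk⟩ => ?_⟩
  have hfe : firstExceed (levelMass L) x = k := by
    refine firstExceed_eq (levelMass_nonneg hL) ?_ ?_
    · linarith [hk.1, cellStart_nonneg (i := i) (hL k)]
    · have : cellStart (L k) i + L k i ≤ levelMass L k := cellStart_add_le_tsum (hL k) (hLs k)
      rw [Finset.sum_range_succ]
      linarith [hk.2]
  rwa [hfe]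

theorem stackAllot_eq_iff_of_le (hR : ∀ i, 0 ≤ R i) (hRs : Summable R)
    (hx₀ : ∑' k, levelMass L k ≤ x) (hx : x < ∑' k, levelMass L k + ∑' i, R i) :
    stackAllot L R x = i ↔ x - ∑' k, levelMass L k ∈
      Set.Ico (cellStart R i) (cellStart R i + R i) := by
  rw [stackAllot, if_neg (not_lt.2 hx₀)]
  exact allot_eq_iff hR hRs (sub_nonneg.2 hx₀) (by linarith)

theorem Ico_inter_preimage_stackAllot (hL : ∀ k i, 0 ≤ L k i) (hLs : ∀ k, Summable (L k))
    (hM : Summable (levelMass L)) (hR : ∀ i, 0 ≤ R i) (hRs : Summable R) (i : ι) :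
    Set.Ico 0 (∑' k, levelMass L k + ∑' j, R j) ∩ stackAllot L R ⁻¹' {i} =
      (⋃ k, Set.Ico (∑ j ∈ Finset.range k, levelMass L j + cellStart (L k) i)
        (∑ j ∈ Finset.range k, levelMass L j + cellStart (L k) i + L k i)) ∪
      Set.Ico (∑' k, levelMass L k + cellStart R i)
        (∑' k, levelMass L k + cellStart R i + R i) := by
  have hS₀ : 0 ≤ ∑' k, levelMass L k := tsum_nonneg (levelMass_nonneg hL)
  have hRsum₀ : 0 ≤ ∑' j, R j := tsum_nonneg hR
  have hR₀ := cellStart_nonneg (i := i) hR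
  have hR₁ := cellStart_add_le_tsum (i := i) hR hRs
  ext x
  simp only [Set.mem_inter_iff, Set.mem_preimage, Set.mem_singleton_iff, Set.mem_union,
    Set.mem_iUnion, Set.mem_Ico]
  constructor
  · rintro ⟨⟨hx₀, hxT⟩, hxi⟩
    by_cases hxS : x < ∑' k, levelMass L k
    · obtain ⟨k, hk⟩ := (stackAllot_eq_iff_of_lt hL hLs hM hx₀ hxS).1 hxi
      exact .inl ⟨k, by linarith [hk.1], by linarith [hk.2]⟩
    · have hx := (stackAllot_eq_iff_of_le hR hRs (not_lt.1 hxS) hxT).1 hxi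
      exact .inr ⟨by linarith [hx.1], by linarith [hx.2]⟩
  · rintro (⟨k, hk₁, hk₂⟩ | ⟨hx₁, hx₂⟩)
    · have ha₀ : 0 ≤ ∑ j ∈ Finset.range k, levelMass L j :=
        Finset.sum_nonneg fun j _ => levelMass_nonneg hL j
      have haS := sum_range_levelMass_le_tsum hL hM (k + 1)
      have hc₀ := cellStart_nonneg (i := i) (hL k)
      have hc₁ : cellStart (L k) i + L k i ≤ levelMass L k := cellStart_add_le_tsum (hL k) (hLs k)
      rw [Finset.sum_range_succ] at haS
      have hxS : x < ∑' k, levelMass L k := by linarith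
      exact ⟨⟨by linarith, by linarith⟩, (stackAllot_eq_iff_of_lt hL hLs hM (by linarith) hxS).2
        ⟨k, by linarith, by linarith⟩⟩
    · exact ⟨⟨by linarith, by linarith⟩, (stackAllot_eq_iff_of_le hR hRs (by linarith)
        (by linarith)).2 ⟨by linarith, by linarith⟩⟩

theorem volume_Ico_inter_preimage_stackAllot (hL : ∀ k i, 0 ≤ L k i)
    (hLs : ∀ k, Summable (L k)) (hM : Summable (levelMass L)) (hR : ∀ i, 0 ≤ R i)
    (hRs : Summable R) (i : ι) :
    volume (Set.Ico 0 (∑' k, levelMass L k + ∑' j, R j) ∩ stackAllot L R ⁻¹' {i}) =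
      ENNReal.ofReal (∑' k, L k i + R i) := by
  set a : ℕ → ℝ := fun k => ∑ j ∈ Finset.range k, levelMass L j
  have hLi : Summable fun k => L k i :=
    hM.of_nonneg_of_le (fun k => hL k i) fun k => (hLs k).le_tsum i fun j _ => hL k j
  have hsub : ∀ k, Set.Ico (a k + cellStart (L k) i) (a k + cellStart (L k) i + L k i) ⊆
      Set.Ico (a k) (a (k + 1)) := fun k x hx => by
    have hc₀ := cellStart_nonneg (i := i) (hL k)
    have hc₁ : cellStart (L k) i + L k i ≤ levelMass L k := cellStart_add_le_tsum (hL k) (hLs k)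
    simp only [a, Finset.sum_range_succ]
    exact ⟨by linarith [hx.1], by linarith [hx.2]⟩
  have hdisj : Pairwise (Function.onFun Disjoint fun k =>
      Set.Ico (a k + cellStart (L k) i) (a k + cellStart (L k) i + L k i)) :=
    (monotone_sum_range (levelMass_nonneg hL)).pairwise_disjoint_on_Ico_succ.mono
      fun k l h => h.mono (hsub k) (hsub l)
  have hdisj' : Disjoint (⋃ k, Set.Ico (a k + cellStart (L k) i) (a k + cellStart (L k) i + L k i))
      (Set.Ico (∑' k, levelMass L k + cellStart R i)
        (∑' k, levelMass L k + cellStart R i + R i)) := by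
    refine Set.disjoint_iUnion_left.2 fun k => Set.disjoint_left.2 fun x hx hx' => ?_
    have haS := sum_range_levelMass_le_tsum hL hM (k + 1)
    linarith [(hsub k hx).2, hx'.1, cellStart_nonneg (i := i) hR]
  rw [Ico_inter_preimage_stackAllot hL hLs hM hR hRs i, measure_union hdisj' measurableSet_Ico,
    measure_iUnion hdisj fun _ => measurableSet_Ico]
  simp only [Real.volume_Ico, add_sub_cancel_left]
  rw [← ENNReal.ofReal_tsum_of_nonneg (fun k => hL k i) hLi,
    ← ENNReal.ofReal_add (tsum_nonneg fun k => hL k i) (hR i)]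

end stack

section kernel

variable {G : Type*} (P : G → (ℕ → G) → ℝ) {k : ℕ} {g : G} {h h' : ℕ → G}

theorem akg_congr (hh : ∀ n < k, h n = h' n) : akg P k g h = akg P k g h' := by
  refine iInf_congr fun z => congr_arg (P g) (funext fun n => ?_)
  split_ifs with hn
  · exact hh n hn
  · rfl

variable {P} (hP : ∀ g w, 0 ≤ P g w)
include hP

theorem akg_nonneg : 0 ≤ akg P k g h :=
  Real.iInf_nonneg fun _ => hP g _

theorem akg_le (z : ℕ → G) : akg P k g h ≤ P g (fun n => if n < k then h n else z (n - k)) :=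
  ciInf_le ⟨0, by rintro _ ⟨z, rfl⟩; exact hP _ _⟩ z

theorem akg_le_self : akg P k g h ≤ P g h := by
  refine (akg_le hP fun n => h (n + k)).trans_eq (congr_arg (P g) (funext fun n => ?_))
  split_ifs with hn
  · rfl
  · rw [Nat.sub_add_cancel (not_lt.1 hn)]

theorem akg_le_akg_succ : akg P k g h ≤ akg P (k + 1) g h := by
  have : Nonempty (ℕ → G) := ⟨h⟩
  refine le_ciInf fun z => (akg_le hP fun n => if n = 0 then h k else z (n - 1)).trans_eq
    (congr_arg (P g) (funext fun n => ?_))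
  rcases lt_trichotomy n k with hn | rfl | hn
  · simp [hn, Nat.lt_succ_of_lt hn]
  · simp
  · simp only [show ¬ n < k by omega, show ¬ n < k + 1 by omega, show n - k ≠ 0 by omega,
      if_false, Nat.sub_sub]

end kernel

section updateFun

variable {G : Type*} {P : G → (ℕ → G) → ℝ} {k : ℕ} {g : G} {h h' : ℕ → G} {x : ℝ}

variable (P) in
noncomputable def levelGap : ℕ → G → (ℕ → G) → ℝ
  | 0, g, h => akg P 0 g h
  | k + 1, g, h => akg P (k + 1) g h - akg P k g h

theorem sum_range_levelGap (k : ℕ) (g : G) (h : ℕ → G) :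
    ∑ j ∈ Finset.range (k + 1), levelGap P j g h = akg P k g h := by
  induction k with
  | zero => simp [levelGap]
  | succ k ih =>
    rw [Finset.sum_range_succ, ih, levelGap]
    ring

theorem levelGap_congr (hh : ∀ n < k, h n = h' n) : levelGap P k g h = levelGap P k g h' := by
  cases k with
  | zero => exact akg_congr P hh
  | succ k => rw [levelGap, levelGap, akg_congr P hh, akg_congr P fun n hn => hh n (by omega)]

section nonneg

variable (hP : ∀ g w, 0 ≤ P g w)
include hP

theorem levelGap_nonneg : 0 ≤ levelGap P k g h := by
  cases k with
  | zero => exact akg_nonneg hP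
  | succ k => exact sub_nonneg.2 (akg_le_akg_succ hP)

theorem sum_range_levelGap_le (n : ℕ) : ∑ j ∈ Finset.range n, levelGap P j g h ≤ P g h :=
  (monotone_sum_range (fun _ => levelGap_nonneg hP) n.le_succ).trans
    ((sum_range_levelGap n g h).trans_le (akg_le_self hP))

theorem summable_levelGap_nat (g : G) (h : ℕ → G) : Summable fun k => levelGap P k g h :=
  summable_of_sum_range_le (fun _ => levelGap_nonneg hP) (sum_range_levelGap_le hP)

theorem tsum_levelGap_le : ∑' k, levelGap P k g h ≤ P g h :=
  Real.tsum_le_of_sum_range_le (fun _ => levelGap_nonneg hP) (sum_range_levelGap_le hP)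

theorem levelGap_le : levelGap P k g h ≤ P g h :=
  ((summable_levelGap_nat hP g h).le_tsum k fun _ _ => levelGap_nonneg hP).trans
    (tsum_levelGap_le hP)

theorem akP_le_tsum_akg : akP P k ≤ ∑' g, akg P k g h :=
  ciInf_le ⟨0, by rintro _ ⟨w, rfl⟩; exact tsum_nonneg fun g => akg_nonneg hP⟩ h

variable (hPsum : ∀ w, HasSum (fun g => P g w) 1)
include hPsum

theorem summable_levelGap (k : ℕ) (h : ℕ → G) : Summable fun g => levelGap P k g h :=
  (hPsum h).summable.of_nonneg_of_le (fun _ => levelGap_nonneg hP) fun _ => levelGap_le hP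

theorem summable_tsum_levelGap (h : ℕ → G) : Summable fun g => ∑' k, levelGap P k g h :=
  (hPsum h).summable.of_nonneg_of_le (fun _ => tsum_nonneg fun _ => levelGap_nonneg hP)
    fun _ => tsum_levelGap_le hP

theorem sum_range_levelMass_levelGap (k : ℕ) (h : ℕ → G) :
    ∑ j ∈ Finset.range (k + 1), levelMass (fun j g => levelGap P j g h) j =
      ∑' g, akg P k g h := by
  simp only [levelMass]
  rw [← Summable.tsum_finsetSum fun j _ => summable_levelGap hP hPsum j h]
  exact tsum_congr fun g => sum_range_levelGap k g h

theorem tsum_akg_le_one : ∑' g, akg P k g h ≤ 1 :=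
  (hPsum h).tsum_eq ▸ Summable.tsum_le_tsum (fun _ => akg_le_self hP)
    ((hPsum h).summable.of_nonneg_of_le (fun _ => akg_nonneg hP) fun _ => akg_le_self hP)
    (hPsum h).summable

theorem summable_levelMass_levelGap (h : ℕ → G) :
    Summable (levelMass fun j g => levelGap P j g h) :=
  summable_of_sum_range_le (levelMass_nonneg fun _ _ => levelGap_nonneg hP) fun n =>
    (monotone_sum_range (levelMass_nonneg fun _ _ => levelGap_nonneg hP) n.le_succ).trans
      ((sum_range_levelMass_levelGap hP hPsum n h).trans_le (tsum_akg_le_one hP hPsum))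

theorem tsum_levelMass_add_tsum_sub (h : ℕ → G) :
    ∑' k, levelMass (fun j g => levelGap P j g h) k + ∑' g, (P g h - ∑' k, levelGap P k g h) =
      1 := by
  rw [Summable.tsum_sub (hPsum h).summable (summable_tsum_levelGap hP hPsum h), (hPsum h).tsum_eq]
  simp only [levelMass]
  rw [tsum_comm_of_nonneg (fun _ _ => levelGap_nonneg hP) (fun k => summable_levelGap hP hPsum k h)
    (summable_levelMass_levelGap hP hPsum h) fun g => summable_levelGap_nat hP g h]
  ring

end nonneg

variable [Encodable G] [Nonempty G]

variable (P) in
noncomputable def updateFun (x : ℝ) (h : ℕ → G) : G :=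
  stackAllot (fun k g => levelGap P k g h) (fun g => P g h - ∑' k, levelGap P k g h) x

theorem measurable_updateFun [MeasurableSpace G] (P : G → (ℕ → G) → ℝ) (h : ℕ → G) :
    Measurable fun x => updateFun P x h :=
  measurable_stackAllot _ _

variable (hP : ∀ g w, 0 ≤ P g w) (hPsum : ∀ w, HasSum (fun g => P g w) 1)
include hP hPsum

theorem volume_Ico_inter_preimage_updateFun (h : ℕ → G) (g : G) :
    volume (Set.Ico 0 1 ∩ (fun x => updateFun P x h) ⁻¹' {g}) = ENNReal.ofReal (P g h) := by
  have := volume_Ico_inter_preimage_stackAllot (fun _ _ => levelGap_nonneg hP)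
    (fun k => summable_levelGap hP hPsum k h) (summable_levelMass_levelGap hP hPsum h)
    (fun g => sub_nonneg.2 (tsum_levelGap_le hP))
    ((hPsum h).summable.sub (summable_tsum_levelGap hP hPsum h)) g
  rwa [tsum_levelMass_add_tsum_sub hP hPsum h, add_sub_cancel] at this

theorem updateFun_congr (hx : x < akP P k) (hh : ∀ n < k, h n = h' n) :
    updateFun P x h = updateFun P x h' :=
  stackAllot_congr (fun _ _ => levelGap_nonneg hP) (summable_levelMass_levelGap hP hPsum h)
    (fun _ _ => levelGap_nonneg hP) (summable_levelMass_levelGap hP hPsum h')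
    (hx.trans_le ((akP_le_tsum_akg hP).trans_eq (sum_range_levelMass_levelGap hP hPsum k h).symm))
    fun _ hj => funext fun _ => levelGap_congr fun n hn => hh n (by omega)

end updateFun

section drivenPath

variable {G : Type*}

/-- The past at time `n` of a path `xs` started from the past `w`:
`xs (n - 1), …, xs 0, w 0, w 1, …`. -/
def past (w xs : ℕ → G) (n : ℕ) : ℕ → G :=
  fun j => if j < n then xs (n - 1 - j) else w (j - n)

theorem past_congr {w xs ys : ℕ → G} {n : ℕ} (h : ∀ m < n, xs m = ys m) :
    past w xs n = past w ys n := by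
  funext j
  unfold past
  split_ifs with hj
  · exact h _ (by omega)
  · rfl

variable [Encodable G] [Nonempty G] (P : G → (ℕ → G) → ℝ) (w : ℕ → G)

noncomputable def drivenPath (u : ℤ → ℝ) (n : ℕ) : G :=
  updateFun P (u n) fun j => if j < n then drivenPath u (n - 1 - j) else w (j - n)
termination_by n
decreasing_by omega

theorem drivenPath_eq (u : ℤ → ℝ) (n : ℕ) :
    drivenPath P w u n = updateFun P (u n) (past w (drivenPath P w u) n) := by
  rw [drivenPath]
  rfl

theorem drivenPath_cylinder (gs : ℕ → G) (N : ℕ) :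
    {u | ∀ m ≤ N, drivenPath P w u m = gs m} =
      ⋂ m ∈ Finset.range (N + 1),
        (fun u : ℤ → ℝ => u m) ⁻¹' ((fun x => updateFun P x (past w gs m)) ⁻¹' {gs m}) := by
  ext u
  simp only [Set.mem_ofPred_eq, Set.mem_iInter, Finset.mem_range, Set.mem_preimage,
    Set.mem_singleton_iff]
  constructor
  · intro hX m hm
    rw [← past_congr fun j hj => hX j (by omega), ← drivenPath_eq]
    exact hX m (by omega)
  · intro hU m
    induction m using Nat.strong_induction_on with
    | _ m ih =>
      intro hm
      rw [drivenPath_eq, past_congr fun j hj => ih j hj (by omega)]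
      exact hU m (by omega)

variable [MeasurableSpace G] [MeasurableSingletonClass G]

theorem measurable_drivenPath : Measurable (drivenPath P w) := by
  refine measurable_pi_lambda _ fun n => ?_
  induction n using Nat.strong_induction_on with
  | _ n ih =>
    -- the past at time `n` only involves the finitely many earlier symbols
    let ext : (Fin n → G) → ℕ → G := fun t m => if hm : m < n then t ⟨m, hm⟩ else w 0
    have hF : Measurable fun p : (ℤ → ℝ) × (Fin n → G) =>
        updateFun P (p.1 n) (past w (ext p.2) n) :=
      measurable_from_prod_countable_left fun t =>
        (measurable_updateFun P (past w (ext t) n)).comp (measurable_pi_apply (n : ℤ))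
    have hT : Measurable fun u (m : Fin n) => drivenPath P w u m :=
      measurable_pi_lambda _ fun m => ih m m.2
    have heq : (fun u => drivenPath P w u n) =
        fun u => updateFun P (u n) (past w (ext fun m => drivenPath P w u m) n) :=
      funext fun u => by
        rw [drivenPath_eq]
        exact congr_arg _ (past_congr fun m hm => by simp [ext, hm])
    rw [heq]
    exact hF.comp (measurable_id.prodMk hT)

end drivenPath

section fdds

variable {G : Type*} [MeasurableSpace G] [MeasurableSingletonClass G] {P : G → (ℕ → G) → ℝ}

theorem map_domRestrict_eq_of_hasFdds [Countable G] {μ ν : Measure (ℕ → G)} {w : ℕ → G}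
    (hμ : HasFdds P μ w) (hν : HasFdds P ν w) (N : ℕ) :
    μ.map (Finset.Iic N : Set ℕ).domRestrict = ν.map (Finset.Iic N : Set ℕ).domRestrict := by
  refine Measure.ext_of_singleton fun y => ?_
  let gs : ℕ → G := fun m => if hm : m ≤ N then y ⟨m, by simpa using hm⟩ else w m
  have hpre : ((Finset.Iic N : Set ℕ).domRestrict : (ℕ → G) → _) ⁻¹' {y} =
      {η | ∀ m ≤ N, η m = gs m} := by
    ext η
    simp only [Set.mem_preimage, Set.mem_singleton_iff, Set.mem_ofPred_eq, funext_iff,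
      Subtype.forall, Finset.coe_Iic, Set.mem_Iic]
    exact forall_congr' fun m => forall_congr' fun hm => by simp [gs, hm]
  rw [Measure.map_apply (measurable_domRestrict_finset _) (measurableSet_singleton y),
    Measure.map_apply (measurable_domRestrict_finset _) (measurableSet_singleton y), hpre, hμ N gs,
    hν N gs]

theorem integral_eq_of_hasFdds [Countable G] {μ ν : Measure (ℕ → G)} {w : ℕ → G}
    (hμ : HasFdds P μ w) (hν : HasFdds P ν w) {N : ℕ} {f : (ℕ → G) → ℝ}
    (hf : DependsOn f (Finset.Iic N : Set ℕ)) : ∫ η, f η ∂μ = ∫ η, f η ∂ν := by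
  obtain ⟨F, rfl⟩ := dependsOn_iff_exists_comp.1 hf
  rw [Function.comp_def,
    ← integral_map (measurable_domRestrict_finset _).aemeasurable
      (measurable_of_countable F).aestronglyMeasurable,
    ← integral_map (measurable_domRestrict_finset _).aemeasurable
      (measurable_of_countable F).aestronglyMeasurable,
    map_domRestrict_eq_of_hasFdds hμ hν]

theorem hasFdds_map_drivenPath [Encodable G] [Nonempty G] (hP : ∀ g w, 0 ≤ P g w)
    (hPsum : ∀ w, HasSum (fun g => P g w) 1) {μ0 : Measure (ℤ → ℝ)} (hiid : IsIIDUniform μ0)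
    (w : ℕ → G) : HasFdds P (μ0.map (drivenPath P w)) w := by
  intro n gs
  have hA : ∀ m, MeasurableSet ((fun x => updateFun P x (past w gs m)) ⁻¹' {gs m}) :=
    fun m => measurable_updateFun P _ (measurableSet_singleton _)
  have hcyl : MeasurableSet {η : ℕ → G | ∀ m ≤ n, η m = gs m} := by measurability
  rw [Measure.map_apply (measurable_drivenPath P w) hcyl]
  change μ0 {u | ∀ m ≤ n, drivenPath P w u m = gs m} = _
  rw [drivenPath_cylinder, (hiid.1.precomp Nat.cast_injective).measure_inter_preimage_eq_mul _
    fun m _ => hA m, ENNReal.ofReal_prod_of_nonneg fun k _ => hP _ _]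
  refine Finset.prod_congr rfl fun m _ => ?_
  rw [← Measure.map_apply (measurable_pi_apply (m : ℤ)) (hA m), hiid.2,
    Measure.restrict_apply (hA m), Set.inter_comm, volume_Ico_inter_preimage_updateFun hP hPsum]
  rfl

end fdds

theorem measurable_hoc (a : ℕ → ℝ) (k : ℕ) : Measurable fun u : ℤ → ℝ => hoc a u 0 k := by
  induction k with
  | zero => exact measurable_const
  | succ k ih =>
    have hstep : Measurable fun p : (ℤ → ℝ) × ℕ => if p.1 (0 + k + 1) < a p.2 then p.2 + 1 else 0 :=
      measurable_from_prod_countable_left fun d => by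
        change Measurable fun x : ℤ → ℝ => if x (0 + k + 1) < a d then d + 1 else 0
        exact Measurable.ite (measurableSet_lt (measurable_pi_apply _) measurable_const)
          measurable_const measurable_const
    exact hstep.comp (measurable_id.prodMk ih)

theorem hoc_le (a : ℕ → ℝ) (u : ℤ → ℝ) (n : ℕ) : hoc a u 0 n ≤ n := by
  induction n with
  | zero => exact le_rfl
  | succ n ih =>
    change (if u (0 + n + 1) < a (hoc a u 0 n) then hoc a u 0 n + 1 else 0) ≤ n + 1
    split_ifs <;> omega

theorem drivenPath_eq_of_lt_hoc {G : Type*} [Encodable G] [Nonempty G] {P : G → (ℕ → G) → ℝ}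
    (hP : ∀ g w, 0 ≤ P g w) (hPsum : ∀ w, HasSum (fun g => P g w) 1) (w v : ℕ → G)
    (u : ℤ → ℝ) (n : ℕ) :
    ∀ j < hoc (akP P) u 0 n, drivenPath P w u (n - j) = drivenPath P v u (n - j) := by
  induction n with
  | zero => intro j hj; exact absurd hj (Nat.not_lt_zero j)
  | succ n ih =>
    intro j hj
    change j < if u (0 + n + 1) < akP P (hoc (akP P) u 0 n) then hoc (akP P) u 0 n + 1 else 0
      at hj
    split_ifs at hj with hu
    · rcases j with _ | j
      · have hW := hoc_le (akP P) u n
        rw [Nat.sub_zero, drivenPath_eq, drivenPath_eq]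
        have hu' : u ((n + 1 : ℕ) : ℤ) < akP P (hoc (akP P) u 0 n) := by
          rwa [show ((n + 1 : ℕ) : ℤ) = 0 + n + 1 by push_cast; ring]
        refine updateFun_congr hP hPsum hu' fun m hm => ?_
        simp only [past, show m < n + 1 by omega, if_true, show n + 1 - 1 - m = n - m by omega]
        exact ih m hm
      · rw [show n + 1 - (j + 1) = n - j by omega]
        exact ih j (by omega)
    · exact absurd hj (Nat.not_lt_zero j)

section

variable {G : Type*} [Countable G] [Nonempty G] [MeasurableSpace G]
  [DiscreteMeasurableSpace G]

theorem stmt11_general (P : G → (ℕ → G) → ℝ)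
    (hPnonneg : ∀ g w, 0 ≤ P g w)
    (hPsum : ∀ w, HasSum (fun g => P g w) 1)
    (μ0 : Measure (ℤ → ℝ)) [IsProbabilityMeasure μ0] (hiid : IsIIDUniform μ0)
    (i s t : ℤ)
    (w v : ℕ → G)
    (μw μv : Measure (ℕ → G))
    (hw : HasFdds P μw w) (hv : HasFdds P μv v)
    (f : (ℕ → G) → ℝ)
    (B : ℝ) (hB : ∀ η, |f η| ≤ B)
    (hlocal : ∀ η η' : ℕ → G,
      (∀ n : ℕ, (s - i).toNat ≤ n → n ≤ (t - i).toNat → η n = η' n) → f η = f η') :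
    |∫ η, f η ∂μw - ∫ η, f η ∂μv| ≤
      2 * B * ∑ j ∈ Finset.range ((t - s).toNat + 1),
        (rho (akP P) μ0 ((s - i).toNat + j)).toReal := by
  have : Encodable G := Encodable.ofCountable G
  have hfN : DependsOn f (Finset.Iic (t - i).toNat : Set ℕ) := fun η η' h =>
    hlocal η η' fun n _ hn => h n (by simpa using hn)
  have hf := measurable_of_dependsOn_finset hfN
  have hXw := measurable_drivenPath P w
  have hXv := measurable_drivenPath P v
  rw [integral_eq_of_hasFdds hw (hasFdds_map_drivenPath hPnonneg hPsum hiid w) hfN,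
    integral_eq_of_hasFdds hv (hasFdds_map_drivenPath hPnonneg hPsum hiid v) hfN,
    integral_map hXw.aemeasurable hf.aestronglyMeasurable,
    integral_map hXv.aemeasurable hf.aestronglyMeasurable]
  have hD : MeasurableSet (⋃ j ∈ Finset.range ((t - s).toNat + 1),
      {u : ℤ → ℝ | hoc (akP P) u 0 ((s - i).toNat + j) = 0}) :=
    .biUnion (Finset.countable_toSet _) fun j _ => measurable_hoc _ _ (measurableSet_singleton 0)
  have hB₀ : 0 ≤ B := (abs_nonneg _).trans (hB fun _ => Classical.arbitrary G)
  refine (abs_integral_sub_le_of_eq_off (hf.comp hXw) (hf.comp hXv) (fun _ => hB _)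
    (fun _ => hB _) hD fun u hu => hlocal _ _ fun n hn₁ hn₂ => ?_).trans
    (mul_le_mul_of_nonneg_left (measureReal_biUnion_finset_le _ _) (by linarith))
  have hpos : 0 < hoc (akP P) u 0 n := Nat.pos_of_ne_zero fun h0 => hu <|
    Set.mem_biUnion (x := n - (s - i).toNat) (by simp only [Finset.coe_range, Set.mem_Iio]; omega)
      (by rwa [Set.mem_ofPred_eq, Nat.add_sub_cancel' hn₁])
  simpa using drivenPath_eq_of_lt_hoc hPnonneg hPsum w v u n 0 hpos

/-- loss of memory: for the chains `μw`, `μv` started at time `i`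
from frozen pasts `w`, `v`, and any bounded measurable observable `f` of the window
`[s,t]` (coordinates `n` with `s - i ≤ n ≤ t - i`), the difference of expectations
is at most `2‖f‖_∞ ∑_{j=0}^{t-s} ρ_{s+j-i}`. -/
theorem stmt11 (P : G → (ℕ → G) → ℝ)
    (hPmeas : ∀ g, Measurable (P g)) (hPnonneg : ∀ g w, 0 ≤ P g w)
    (hPsum : ∀ w, HasSum (fun g => P g w) 1)
    (μ0 : Measure (ℤ → ℝ)) [IsProbabilityMeasure μ0] (hiid : IsIIDUniform μ0)
    (i s t : ℤ) (his : i ≤ s) (hst : s ≤ t)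
    (w v : ℕ → G)
    (μw μv : Measure (ℕ → G)) [IsProbabilityMeasure μw] [IsProbabilityMeasure μv]
    (hw : HasFdds P μw w) (hv : HasFdds P μv v)
    (f : (ℕ → G) → ℝ) (hfm : Measurable f)
    (B : ℝ) (hB : ∀ η, |f η| ≤ B)
    (hlocal : ∀ η η' : ℕ → G,
      (∀ n : ℕ, (s - i).toNat ≤ n → n ≤ (t - i).toNat → η n = η' n) → f η = f η') :
    |∫ η, f η ∂μw - ∫ η, f η ∂μv| ≤
      2 * B * ∑ j ∈ Finset.range ((t - s).toNat + 1),
        (rho (akP P) μ0 ((s - i).toNat + j)).toReal :=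
  stmt11_general P hPnonneg hPsum μ0 hiid i s t w v μw μv hw hv f B hB hlocal

end
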